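/- arXiv:cs/0611121 — 2 statements merged into one kernel-verified Lean document; each statement's English description precedes it below -/
import Mathlib

section
/- Privacy amplification bound: if G is uniformly distributed over a universal₂ family of hash functions from {0,1}^n to {0,1}^k and S is a random variable on {0,1}^n with Rényi entropy of order 2 at least c, then H(G(S)|G) ≥ k − 2^{k−c}/ln 2. -/
/-!
For each hash `gᵢ`, the Shannon entropy of `gᵢ(S)` dominates its collision entropy
`-log₂ Σₐ P(gᵢ(S) = a)²`, and by concavity of `log` the average of these is at least `-log₂` of the
average collision probability. Universality bounds that average by `Σₛ q(s)² + 2^{-k}`: equal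
inputs contribute the collision probability of `S`, which is at most `2^{-c}`, and distinct inputs
collide with probability at most `2^{-k}`. Finally
`-log₂ (2^{-k} + 2^{-c}) = k - log₂ (1 + 2^{k-c}) ≥ k - 2^{k-c} / ln 2` since `ln (1 + x) ≤ x`.
-/

open Finset

/-- Probability of the event `f = a` under a pmf `p` on a finite sample space. -/
def pmfProb {Ω α : Type*} [Fintype Ω] [DecidableEq α] (p : Ω → ℝ) (f : Ω → α) (a : α) : ℝ :=
  ∑ ω ∈ Finset.univ.filter (fun ω => f ω = a), p ω

/-- Shannon entropy (in bits) of the random variable `f` under the pmf `p`. -/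
noncomputable def pmfEntropy {Ω α : Type*} [Fintype Ω] [Fintype α] [DecidableEq α]
    (p : Ω → ℝ) (f : Ω → α) : ℝ :=
  -∑ a : α, pmfProb p f a * Real.logb 2 (pmfProb p f a)

namespace Real

lemma concaveOn_logb_Ioi {b : ℝ} (hb : 1 < b) : ConcaveOn ℝ (Set.Ioi 0) (logb b) := by
  have h : logb b = fun x => (log b)⁻¹ • log x := funext fun x => div_eq_inv_mul _ _
  exact h ▸ strictConcaveOn_log_Ioi.concaveOn.smul (inv_nonneg.2 (log_pos hb).le)

lemma sum_mul_logb_le_logb_sum_mul {ι : Type*} {b : ℝ} (hb : 1 < b) (t : Finset ι)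
    (w v : ι → ℝ) (hw : ∀ i ∈ t, 0 ≤ w i) (hw1 : ∑ i ∈ t, w i = 1)
    (hv : ∀ i ∈ t, 0 < v i) :
    ∑ i ∈ t, w i * logb b (v i) ≤ logb b (∑ i ∈ t, w i * v i) := by
  simpa using (concaveOn_logb_Ioi hb).le_map_sum hw hw1 hv

lemma sub_rpow_div_log_le_neg_logb_add {b : ℝ} (hb : 1 < b) (k c : ℝ) :
    k - b ^ (k - c) / log b ≤ -logb b (b ^ (-k) + b ^ (-c)) := by
  have hb0 : 0 < b := by linarith
  have hsplit : b ^ (-k) + b ^ (-c) = b ^ (-k) * (1 + b ^ (k - c)) := by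
    rw [mul_add, mul_one, ← rpow_add hb0]
    ring_nf
  have hlog : log (1 + b ^ (k - c)) ≤ b ^ (k - c) := by
    linarith [log_le_sub_one_of_pos (by positivity : 0 < 1 + b ^ (k - c))]
  rw [hsplit, logb_mul (by positivity) (by positivity), logb_rpow hb0 hb.ne', neg_add,
    neg_neg, logb]
  linarith [div_le_div_of_nonneg_right hlog (log_pos hb).le]

end Real

open Real

lemma sum_sq_pos_of_sum_ne_zero {α : Type*} (s : Finset α) (P : α → ℝ)
    (hP : ∑ a ∈ s, P a ≠ 0) : 0 < ∑ a ∈ s, P a ^ 2 := by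
  obtain ⟨a, ha, hPa⟩ := exists_ne_zero_of_sum_ne_zero hP
  exact sum_pos' (fun _ _ => sq_nonneg _) ⟨a, ha, by positivity⟩

lemma neg_logb_sum_sq_le_neg_sum_mul_logb {α : Type*} [Fintype α] {b : ℝ} (hb : 1 < b)
    (P : α → ℝ) (hP : ∀ a, 0 ≤ P a) (hP1 : ∑ a, P a = 1) :
    -logb b (∑ a, P a ^ 2) ≤ -∑ a, P a * logb b (P a) := by
  set t := univ.filter (fun a => P a ≠ 0)
  have restrict {f : α → ℝ} (hf : ∀ a, P a = 0 → f a = 0) : ∑ a ∈ t, f a = ∑ a, f a :=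
    sum_filter_of_ne fun a _ hfa h => hfa (hf a h)
  rw [← restrict (f := fun a => P a ^ 2) (by simp_all),
    ← restrict (f := fun a => P a * logb b (P a)) (by simp_all), neg_le_neg_iff]
  simpa [sq] using sum_mul_logb_le_logb_sum_mul hb t P P (fun a _ => hP a)
    (by rw [restrict (fun a h => h), hP1])
    (fun a ha => (hP a).lt_of_ne' (mem_filter.1 ha).2)

lemma sum_pmfProb_sq_eq {Ω α : Type*} [Fintype Ω] [Fintype α] [DecidableEq α]
    (q : Ω → ℝ) (f : Ω → α) :
    ∑ a, pmfProb q f a ^ 2 = ∑ s, ∑ t, if f s = f t then q s * q t else 0 := by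
  simp only [pmfProb, sq, sum_filter, sum_mul_sum]
  rw [sum_comm]
  refine sum_congr rfl fun s _ => ?_
  rw [sum_comm]
  refine sum_congr rfl fun t _ => ?_
  simp only [ite_mul, mul_ite, zero_mul, mul_zero]
  simp [eq_comm]

lemma sum_sum_pmfProb_sq_le {ι Ω α : Type*} [Fintype ι] [Fintype Ω] [Fintype α]
    [DecidableEq α] (g : ι → Ω → α) {δ : ℝ} (hδ : 0 ≤ δ)
    (huniv : ∀ x y, x ≠ y → (#{i | g i x = g i y} : ℝ) / Fintype.card ι ≤ δ)
    (q : Ω → ℝ) (hq : ∀ s, 0 ≤ q s) (hsum : ∑ s, q s = 1) :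
    (∑ i, ∑ a, pmfProb q (g i) a ^ 2) / Fintype.card ι ≤ ∑ s, q s ^ 2 + δ := by
  classical
  set r : Ω → Ω → ℝ := fun s t => (#{i | g i s = g i t} : ℝ) / Fintype.card ι
  have hr_le_one (s t : Ω) : r s t ≤ 1 :=
    div_le_one_of_le₀ (mod_cast card_filter_le _ _) (Nat.cast_nonneg _)
  have hterm (s t : Ω) : q s * q t * r s t ≤ (if s = t then q s ^ 2 else 0) + δ * (q s * q t) := by
    have hqq : 0 ≤ q s * q t := mul_nonneg (hq s) (hq t)
    split_ifs with hst
    · subst hst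
      nlinarith [hr_le_one s s]
    · nlinarith [huniv s t hst]
  calc (∑ i, ∑ a, pmfProb q (g i) a ^ 2) / Fintype.card ι
      = ∑ s, ∑ t, q s * q t * r s t := by
        simp only [sum_pmfProb_sq_eq, r, sum_div]
        rw [sum_comm]
        refine sum_congr rfl fun s _ => ?_
        rw [sum_comm]
        refine sum_congr rfl fun t _ => ?_
        rw [← sum_div, ← sum_filter, sum_const, nsmul_eq_mul]
        ring
    _ ≤ ∑ s, ∑ t, ((if s = t then q s ^ 2 else 0) + δ * (q s * q t)) := by
        gcongr with s _ t _
        exact hterm s t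
    _ = ∑ s, q s ^ 2 + δ := by
        simp [sum_add_distrib, ← mul_sum, hsum]

lemma neg_logb_mean_le_mean_neg_logb {ι : Type*} [Fintype ι] [Nonempty ι] {b : ℝ} (hb : 1 < b)
    (v : ι → ℝ) (hv : ∀ i, 0 < v i) :
    -logb b ((∑ i, v i) / Fintype.card ι) ≤ (∑ i, -logb b (v i)) / Fintype.card ι := by
  have hcard : (0 : ℝ) < Fintype.card ι := mod_cast Fintype.card_pos
  have h := sum_mul_logb_le_logb_sum_mul hb univ (fun _ => (Fintype.card ι : ℝ)⁻¹) v
    (fun _ _ => by positivity) (by simp [hcard.ne']) (fun i _ => hv i)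
  rw [← mul_sum, ← mul_sum] at h
  rw [sum_neg_distrib, neg_div, neg_le_neg_iff, div_eq_inv_mul, div_eq_inv_mul]
  exact h

/-- The conditional entropy `H(G(S)|G)` is written as the average `(1/F)·Σ_i H(g_i(S))`:
`G` is uniform on `Fin F` and independent of `S`. -/
theorem privacy_amplification
    (n k F : ℕ) (hF : 0 < F)
    (g : Fin F → (Fin n → Bool) → (Fin k → Bool))
    (huniv : ∀ x y : Fin n → Bool, x ≠ y →
      ((Finset.univ.filter (fun i : Fin F => g i x = g i y)).card : ℝ) / F ≤
        (2 : ℝ) ^ (-(k : ℝ)))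
    (q : (Fin n → Bool) → ℝ) (hq : ∀ s, 0 ≤ q s) (hsum : ∑ s, q s = 1)
    (c : ℝ) (hRenyi : -Real.logb 2 (∑ s, q s ^ 2) ≥ c) :
    (1 / (F : ℝ)) * ∑ i : Fin F, pmfEntropy q (g i) ≥
      (k : ℝ) - (2 : ℝ) ^ ((k : ℝ) - c) / Real.log 2 := by
  have : Nonempty (Fin F) := ⟨⟨0, hF⟩⟩
  set C : Fin F → ℝ := fun i => ∑ a, pmfProb q (g i) a ^ 2
  have hP_sum (i : Fin F) : ∑ a, pmfProb q (g i) a = 1 := hsum ▸ sum_fiberwise _ _ _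
  have hC_pos (i : Fin F) : 0 < C i := sum_sq_pos_of_sum_ne_zero _ _ (by simp [hP_sum i])
  have hcoll : ∑ s, q s ^ 2 ≤ 2 ^ (-c) :=
    (logb_le_iff_le_rpow one_lt_two (sum_sq_pos_of_sum_ne_zero _ _ (by simp [hsum]))).1
      (by linarith)
  have hC_mean : (∑ i, C i) / F ≤ 2 ^ (-(k : ℝ)) + 2 ^ (-c) := by
    have h := sum_sum_pmfProb_sq_le g (δ := 2 ^ (-(k : ℝ))) (by positivity)
      (by simpa only [Fintype.card_fin] using huniv) q hq hsum
    simp only [Fintype.card_fin] at h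
    linarith
  rw [one_div_mul_eq_div, ge_iff_le]
  calc (k : ℝ) - 2 ^ ((k : ℝ) - c) / log 2
      ≤ -logb 2 (2 ^ (-(k : ℝ)) + 2 ^ (-c)) := sub_rpow_div_log_le_neg_logb_add one_lt_two k c
    _ ≤ -logb 2 ((∑ i, C i) / F) := by
        have hC_mean_pos : 0 < (∑ i, C i) / F :=
          div_pos (sum_pos (fun i _ => hC_pos i) univ_nonempty) (mod_cast hF)
        exact neg_le_neg (logb_le_logb_of_le one_lt_two hC_mean_pos hC_mean)
    _ ≤ (∑ i, -logb 2 (C i)) / F := by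
        simpa using neg_logb_mean_le_mean_neg_logb one_lt_two C hC_pos
    _ ≤ (∑ i, pmfEntropy q (g i)) / F := by
        gcongr with i
        exact neg_logb_sum_sq_le_neg_sum_mul_logb one_lt_two _
          (fun a => sum_nonneg fun s _ => hq s) (hP_sum i)
end

section
/- Rényi entropy and side information: if S is a discrete random variable and M a random variable taking at most |M| values, then for any s > 0, with probability at least 1 − 2^{−s} over (the realization m of) M, R(S | M = m) ≥ R(S) − log₂|M| − 2s − 2, where R is order-2 Rényi entropy. -/
/-!
Write `P = ∑ₐ P(S = a)²` for the collision probability of `S` and `c m = ∑ₐ P(S = a, M = m)²`,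
so that the conditional collision probability given `M = m` is `c m / P(M = m)²` and
`∑ₘ c m ≤ P`. If `m` violates the bound, the logarithms unfold to
`P(M = m)² · 2^(2s+2) · |M| · P < c m`. Summing over the set `B` of such `m` and applying
Cauchy–Schwarz, `(∑_{m ∈ B} P(M = m))² · 2^(2s+2) · |M| · P ≤ |B| · ∑ₘ c m ≤ |M| · P`,
so `P(M ∈ B) ≤ 2^(-s-1)`.
-/

open Finset Real

noncomputable def collisionProb {ι : Type*} [Fintype ι] (q : ι → ℝ) : ℝ := ∑ i, q i ^ 2

section CollisionProb

variable {ι : Type*} [Fintype ι]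

lemma collisionProb_nonneg (q : ι → ℝ) : 0 ≤ collisionProb q :=
  sum_nonneg fun _ _ => sq_nonneg _

lemma collisionProb_div_const (q : ι → ℝ) (t : ℝ) :
    collisionProb (fun i => q i / t) = collisionProb q / t ^ 2 := by
  simp only [collisionProb, div_pow, sum_div]

lemma collisionProb_pos_of_sum_ne_zero {q : ι → ℝ} (hq : ∑ i, q i ≠ 0) :
    0 < collisionProb q :=
  pos_of_mul_pos_right ((sq_pos_of_ne_zero hq).trans_le sq_sum_le_card_mul_sum_sq)
    (Nat.cast_nonneg _)

end CollisionProb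

lemma sq_sum_mul_le_card_mul_of_sq_mul_le {ι : Type*} {B : Finset ι} {f g : ι → ℝ} {D : ℝ}
    (hD : 0 ≤ D) (hfg : ∀ i ∈ B, f i ^ 2 * D ≤ g i) :
    (∑ i ∈ B, f i) ^ 2 * D ≤ #B * ∑ i ∈ B, g i := by
  calc (∑ i ∈ B, f i) ^ 2 * D ≤ #B * (∑ i ∈ B, f i ^ 2) * D :=
        mul_le_mul_of_nonneg_right sq_sum_le_card_mul_sum_sq hD
    _ = #B * ∑ i ∈ B, f i ^ 2 * D := by rw [mul_assoc, sum_mul]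
    _ ≤ #B * ∑ i ∈ B, g i := mul_le_mul_of_nonneg_left (sum_le_sum hfg) (Nat.cast_nonneg _)

section JointWeight

variable {α β : Type*} [Fintype α] [Fintype β] {q : α → β → ℝ}

lemma sum_collisionProb_slice_le (hq : ∀ a m, 0 ≤ q a m) :
    ∑ m, collisionProb (fun a => q a m) ≤ collisionProb (fun a => ∑ m, q a m) := by
  simp only [collisionProb]
  rw [sum_comm]
  exact sum_le_sum fun a _ => sum_sq_le_sq_sum_of_nonneg fun m _ => hq a m

lemma collisionProb_slice_le (hq : ∀ a m, 0 ≤ q a m) (m : β) :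
    collisionProb (fun a => q a m) ≤ collisionProb (fun a => ∑ m, q a m) :=
  (single_le_sum (f := fun m => collisionProb (fun a => q a m))
    (fun _ _ => collisionProb_nonneg _) (mem_univ m)).trans (sum_collisionProb_slice_le hq)

lemma sq_sum_marginal_mul_le_one (hq : ∀ a m, 0 ≤ q a m) {B : Finset β} {x : ℝ} (hx : 0 ≤ x)
    (hB : ∀ m ∈ B, (∑ a, q a m) ^ 2 * (x * (Fintype.card β * collisionProb (fun a => ∑ m, q a m)))
      ≤ collisionProb (fun a => q a m)) :
    (∑ m ∈ B, ∑ a, q a m) ^ 2 * x ≤ 1 := by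
  set P := collisionProb (fun a => ∑ m, q a m)
  by_cases hzero : ∑ m ∈ B, ∑ a, q a m = 0
  · simp [hzero]
  obtain ⟨m₀, -, hm₀⟩ := exists_ne_zero_of_sum_ne_zero hzero
  have hP : 0 < P := (collisionProb_pos_of_sum_ne_zero hm₀).trans_le (collisionProb_slice_le hq m₀)
  have hn : (0 : ℝ) < Fintype.card β := Nat.cast_pos.2 (Fintype.card_pos_iff.2 ⟨m₀⟩)
  have hcard : (#B : ℝ) * ∑ m ∈ B, collisionProb (fun a => q a m) ≤ Fintype.card β * P :=
    mul_le_mul (by exact_mod_cast card_le_univ B)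
      ((sum_le_sum_of_subset_of_nonneg (subset_univ B) fun _ _ _ => collisionProb_nonneg _).trans
        (sum_collisionProb_slice_le hq))
      (sum_nonneg fun _ _ => collisionProb_nonneg _) hn.le
  rw [← mul_le_mul_iff_of_pos_right (by positivity : (0 : ℝ) < Fintype.card β * P), one_mul,
    mul_assoc]
  exact (sq_sum_mul_le_card_mul_of_sq_mul_le (by positivity) hB).trans hcard

end JointWeight

lemma sq_mul_lt_of_neg_logb_div_lt {t c P n r : ℝ} (ht : t ≠ 0) (hc : 0 < c) (hP : 0 < P)
    (hn : 0 < n) (h : -logb 2 (c / t ^ 2) < -logb 2 P - logb 2 n - r) :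
    t ^ 2 * (2 ^ r * (n * P)) < c := by
  have ht2 : 0 < t ^ 2 := by positivity
  rw [mul_comm, ← lt_div_iff₀ ht2, ← logb_lt_logb_iff one_lt_two (by positivity) (by positivity),
    logb_mul (by positivity) (by positivity), logb_rpow two_pos (by norm_num),
    logb_mul hn.ne' hP.ne']
  linarith

lemma le_rpow_neg_of_sq_mul_le_one {x s : ℝ} (hx : 0 ≤ x) (h : x ^ 2 * 2 ^ (2 * s + 2) ≤ 1) :
    x ≤ 2 ^ (-s) := by
  have hpow : (2 : ℝ) ^ (2 * s + 2) = (2 ^ (s + 1)) ^ 2 := by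
    rw [← rpow_mul_natCast zero_le_two]; ring_nf
  have hx1 : x * 2 ^ (s + 1) ≤ 1 := by
    rw [hpow, ← mul_pow] at h
    exact (pow_le_one_iff_of_nonneg (by positivity) two_ne_zero).1 h
  calc x ≤ 1 / 2 ^ (s + 1) := (le_div_iff₀ (by positivity)).2 hx1
    _ = 2 ^ (-(s + 1)) := by rw [rpow_neg zero_le_two, one_div]
    _ ≤ 2 ^ (-s) := rpow_le_rpow_of_exponent_le one_le_two (by linarith)

theorem renyi_side_information_general
    {α β : Type*} [Fintype α] [Fintype β]
    (p : α × β → ℝ) (hp : ∀ z, 0 ≤ p z)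
    (pM : β → ℝ) (hpM : ∀ m, pM m = ∑ a, p (a, m))
    (RS : ℝ) (hRS : RS = -Real.logb 2 (∑ a, (∑ m, p (a, m)) ^ 2))
    (condR : β → ℝ)
    (hcondR : ∀ m, condR m = -Real.logb 2 (∑ a, (p (a, m) / pM m) ^ 2))
    (s : ℝ) :
    ∑ m ∈ Finset.univ.filter
        (fun m => condR m < RS - Real.logb 2 (Fintype.card β) - 2 * s - 2),
      pM m ≤ (2 : ℝ) ^ (-s) := by
  obtain rfl : pM = fun m => ∑ a, p (a, m) := funext hpM
  have hq : ∀ a m, 0 ≤ p (a, m) := fun a m => hp (a, m)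
  refine le_rpow_neg_of_sq_mul_le_one (sum_nonneg fun m _ => sum_nonneg fun a _ => hq a m)
    (sq_sum_marginal_mul_le_one hq (by positivity) fun m hm => ?_)
  rcases eq_or_ne (∑ a, p (a, m)) 0 with h0 | h0
  · simpa [h0] using collisionProb_nonneg _
  have hc := collisionProb_pos_of_sum_ne_zero h0
  refine (sq_mul_lt_of_neg_logb_div_lt h0 hc (hc.trans_le (collisionProb_slice_le hq m))
    (Nat.cast_pos.2 (Fintype.card_pos_iff.2 ⟨m⟩)) ?_).le
  have hbad := (mem_filter.1 hm).2
  rw [hcondR, hRS] at hbad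
  change -logb 2 (collisionProb fun a => p (a, m) / ∑ a, p (a, m)) <
    -logb 2 (collisionProb fun a => ∑ m, p (a, m)) - _ - 2 * s - 2 at hbad
  rw [collisionProb_div_const] at hbad
  linarith

/-- Rényi entropy and side information (Cachin): if `S` (over finite `α`, with joint pmf
`p` on `α × β`) and `M` (over finite `β`, of cardinality `|M|`) are jointly distributed,
then for any `s > 0`, with probability at least `1 − 2^{−s}` over the realization `m` of
`M`, `R(S | M = m) ≥ R(S) − log₂|M| − 2s − 2`, where `R` is order-2 Rényi entropy. -/
theorem renyi_side_information
    {α β : Type*} [Fintype α] [Fintype β]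
    (p : α × β → ℝ) (hp : ∀ z, 0 ≤ p z) (hsum : ∑ z, p z = 1)
    (pM : β → ℝ) (hpM : ∀ m, pM m = ∑ a, p (a, m))
    (RS : ℝ) (hRS : RS = -Real.logb 2 (∑ a, (∑ m, p (a, m)) ^ 2))
    (condR : β → ℝ)
    (hcondR : ∀ m, condR m = -Real.logb 2 (∑ a, (p (a, m) / pM m) ^ 2))
    (s : ℝ) (hs : 0 < s) :
    ∑ m ∈ Finset.univ.filter
        (fun m => condR m < RS - Real.logb 2 (Fintype.card β) - 2 * s - 2),
      pM m ≤ (2 : ℝ) ^ (-s) :=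
  renyi_side_information_general p hp pM hpM RS hRS condR hcondR s
end
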